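/- Define V(n_1, n_2) = (2/(3(2+π))) (1/(n_1-1)^2 - 6(n_2-1) sin(π/(2(n_2-1))) + 3π) for integers n_1, n_2 ≥ 2. Then V(3,3) < V(2,4) and V(3,3) < V(4,2); moreover V(3,3) = (12π + 1 - 24√2)/(12 + 6π). -/
import Mathlib


open Real

/-- Conditional constrained quantization error for the uniform distribution on the
boundary of the unit semicircular disc with `n₁` equally spaced points on the base
and `n₂` equally spaced points on the arc (both including the corners). -/
noncomputable def semiV (n₁ n₂ : ℕ) : ℝ :=
  (2 / (3 * (2 + π))) *
    (1 / ((n₁ : ℝ) - 1)^2 - 6 * ((n₂ : ℝ) - 1) * Real.sin (π / (2 * ((n₂ : ℝ) - 1))) + 3 * π)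

/-- For four points with the corners fixed, the balanced configuration `(3,3)` beats
both `(2,4)` and `(4,2)`, and its error equals `(12π + 1 - 24√2)/(12 + 6π)`. -/
theorem stmt7 :
    semiV 3 3 < semiV 2 4 ∧ semiV 3 3 < semiV 4 2 ∧
    semiV 3 3 = (12 * π + 1 - 24 * Real.sqrt 2) / (12 + 6 * π) := by
  have hπ := Real.pi_pos
  have h33 : semiV 3 3 = (2 / (3 * (2 + π))) * (1/4 - 6 * Real.sqrt 2 + 3 * π) := by
    unfold semiV
    have h4 : π / (2 * ((3:ℕ) - 1 : ℝ)) = π / 4 := by norm_num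
    rw [h4, Real.sin_pi_div_four]
    push_cast; ring
  have h24 : semiV 2 4 = (2 / (3 * (2 + π))) * (-8 + 3 * π) := by
    unfold semiV
    have h6 : π / (2 * ((4:ℕ) - 1 : ℝ)) = π / 6 := by norm_num
    rw [h6, Real.sin_pi_div_six]
    push_cast; ring
  have h42 : semiV 4 2 = (2 / (3 * (2 + π))) * (1/9 - 6 + 3 * π) := by
    unfold semiV
    have h2 : π / (2 * ((2:ℕ) - 1 : ℝ)) = π / 2 := by norm_num
    rw [h2, Real.sin_pi_div_two]
    push_cast; ring
  have hfac : (0:ℝ) < 2 / (3 * (2 + π)) := by positivity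
  have hs : (1.4:ℝ) < Real.sqrt 2 := by
    have := Real.sq_sqrt (by norm_num : (2:ℝ) ≥ 0)
    nlinarith [Real.sqrt_nonneg 2]
  refine ⟨?_, ?_, ?_⟩
  · rw [h33, h24]
    apply mul_lt_mul_of_pos_left _ hfac
    nlinarith
  · rw [h33, h42]
    apply mul_lt_mul_of_pos_left _ hfac
    nlinarith
  · rw [h33]
    rw [div_mul_eq_mul_div, eq_div_iff (by positivity), div_mul_eq_mul_div,
      div_eq_iff (by positivity : (3:ℝ) * (2 + π) ≠ 0)]
    ring
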